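/- arXiv:2311.11042 — 2 statements merged into one kernel-verified Lean document; each statement's English description precedes it below -/
import Mathlib

section
/- Let d ≥ 2 and let 𝒫 ⊂ ℝ^d be the polytope defined by 0 ≤ x_i ≤ 2 for 1 ≤ i ≤ d−1, 0 ≤ x_d ≤ d, and x_1 + ··· + x_d ≤ d+1. Then the set of reduced degrees { rdeg y : y ∈ M*(𝒫) } equals {1, 2, ..., d−1}. -/
open Set

noncomputable section

/-- Lift a point of `ℝ^m` to height 1 in `ℝ^(m+1)`. -/
def lift {m : ℕ} (x : Fin m → ℝ) : Fin (m + 1) → ℝ := Fin.snoc x 1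

/-- A point with integer coordinates (a lattice point). -/
def isLat {n : ℕ} (x : Fin n → ℝ) : Prop := ∀ i, ∃ z : ℤ, x i = (z : ℝ)

/-- The cone `C(P)` generated by `P × {1}` (for convex `P`). -/
def coneOf {m : ℕ} (P : Set (Fin m → ℝ)) : Set (Fin (m + 1) → ℝ) :=
  {y | ∃ (c : ℝ) (p : Fin m → ℝ), 0 ≤ c ∧ p ∈ P ∧ y = c • lift p}

/-- The semigroup `M(P)` generated by the lattice points of `P × {1}`. -/
def Msemi {m : ℕ} (P : Set (Fin m → ℝ)) : AddSubmonoid (Fin (m + 1) → ℝ) :=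
  AddSubmonoid.closure {y | ∃ p ∈ P, isLat p ∧ y = lift p}

/-- `M*(P)`: the lattice points in the relative interior of `C(P)`. -/
def Mstar {m : ℕ} (P : Set (Fin m → ℝ)) : Set (Fin (m + 1) → ℝ) :=
  {y | y ∈ intrinsicInterior ℝ (coneOf P) ∧ isLat y}

/-- The degree: the last coordinate. -/
def deg {m : ℕ} (y : Fin (m + 1) → ℝ) : ℝ := y (Fin.last m)

/-- The reduced `P`-degree of `y`. -/
def rdeg {m : ℕ} (P : Set (Fin m → ℝ)) (y : Fin (m + 1) → ℝ) : ℝ :=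
  sInf {r | ∃ z w, z ∈ Mstar P ∧ w ∈ Msemi P ∧ y = z + w ∧ r = deg z}

/-- An empty lattice simplex: its only lattice points are its vertices. -/
def IsEmptyLatticeSimplex {m : ℕ} (s : Set (Fin m → ℝ)) : Prop :=
  ∃ (k : ℕ) (x : Fin (k + 1) → (Fin m → ℝ)), AffineIndependent ℝ x ∧
    (∀ i, isLat (x i)) ∧ s = convexHull ℝ (Set.range x) ∧
    (∀ p ∈ s, isLat p → p ∈ Set.range x)

/-- A lattice triangulation of `P`: a finite face-closed family of empty lattice
simplices covering `P`, with pairwise disjoint relative interiors (every point of `P`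
lies in the relative interior of exactly one simplex), and using every lattice point
of `P` as a vertex. -/
structure IsLatticeTriangulation {m : ℕ} (P : Set (Fin m → ℝ))
    (T : Set (Set (Fin m → ℝ))) : Prop where
  finite : T.Finite
  simplex : ∀ s ∈ T, IsEmptyLatticeSimplex s
  subset : ∀ s ∈ T, s ⊆ P
  partition : ∀ p ∈ P, ∃! s, s ∈ T ∧ p ∈ intrinsicInterior ℝ s
  vertex : ∀ p ∈ P, isLat p → {p} ∈ T

/-!
Write `P = {0 ≤ xⱼ ≤ cⱼ, x₁ + ⋯ + xₙ ≤ n + 1}` with integer caps `cⱼ ≥ 2`, so that `(1, …, 1)`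
is an interior lattice point and the interior of the cone `C(P)` is cut out by the strict
inequalities. Every `y ∈ M*(P)` of degree `t ≥ n` splits as `y' + (p, 1)` with `p` a lattice
point of `P` and `y' ∈ M*(P)`: each `pⱼ` is confined to an integer interval, and a counting
argument shows the admissible values of `∑ pⱼ` meet the sums attainable in these intervals.
Peeling off such points leaves a summand in `M*(P)` of degree at most `n - 1`. Conversely, when
one cap equals `n`, the point `(1, …, 1, (n + 1) i - n; i)` of degree `i < n` admits only
decompositions `z + w` with `deg z = i`.
-/

theorem intrinsicInterior_eq_interior_of_nonempty {V : Type*} [NormedAddCommGroup V]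
    [NormedSpace ℝ V] {s : Set V} (h : (interior s).Nonempty) :
    intrinsicInterior ℝ s = interior s := by
  have hspan : affineSpan ℝ s = ⊤ :=
    affineSpan_eq_top_of_nonempty_interior (h.mono (interior_mono (subset_convexHull ℝ s)))
  have hsurj : Function.Surjective ((↑) : affineSpan ℝ s → V) :=
    fun x => ⟨⟨x, hspan ▸ AffineSubspace.mem_top ℝ V x⟩, rfl⟩
  have hhomeo : IsHomeomorph ((↑) : affineSpan ℝ s → V) :=
    isHomeomorph_iff_isEmbedding_surjective.2 ⟨.subtypeVal, hsurj⟩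
  rw [intrinsicInterior, hhomeo.image_interior, image_preimage_eq _ hsurj]

theorem pos_of_mem_interior_setOf_nonneg {V : Type*} [NormedAddCommGroup V] [NormedSpace ℝ V]
    {f : V → ℝ} {x v : V} {a : ℝ} (ha : 0 < a) (hf : ∀ t : ℝ, f (x + t • v) = f x + a * t)
    (hx : x ∈ interior {y | 0 ≤ f y}) : 0 < f x := by
  have hline : ∀ᶠ t in nhds (0 : ℝ), x + t • v ∈ {y | 0 ≤ f y} := by
    have hcont : Continuous fun t : ℝ => x + t • v := by fun_prop
    exact hcont.continuousAt.preimage_mem_nhds (by simpa using mem_interior_iff_mem_nhds.1 hx)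
  obtain ⟨ε, hε, hball⟩ := Metric.eventually_nhds_iff.1 hline
  have hmem := hball (y := -(ε / 2))
    (by rw [Real.dist_0_eq_abs, abs_neg, abs_of_pos (by positivity)]; linarith)
  simp only [mem_ofPred_eq, hf] at hmem
  nlinarith

theorem deg_lift {m : ℕ} (p : Fin m → ℝ) : deg (lift p) = 1 := by
  simp [deg, lift]

theorem deg_nonneg_of_mem_coneOf {m : ℕ} {P : Set (Fin m → ℝ)} {y : Fin (m + 1) → ℝ}
    (hy : y ∈ coneOf P) : 0 ≤ deg y := by
  obtain ⟨c, p, hc, -, rfl⟩ := hy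
  simpa [deg, lift] using hc

theorem isLat_iff {m : ℕ} {y : Fin m → ℝ} :
    isLat y ↔ ∃ Y : Fin m → ℤ, y = fun i => (Y i : ℝ) :=
  ⟨fun h => ⟨fun i => (h i).choose, funext fun i => (h i).choose_spec⟩,
    by rintro ⟨Y, rfl⟩ i; exact ⟨Y i, rfl⟩⟩

theorem exists_deg_eq_natCast {m : ℕ} {P : Set (Fin m → ℝ)} {y : Fin (m + 1) → ℝ}
    (hy : y ∈ Mstar P) : ∃ k : ℕ, deg y = k := by
  obtain ⟨z, hz⟩ := hy.2 (Fin.last m)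
  have hnonneg : 0 ≤ deg y := deg_nonneg_of_mem_coneOf (intrinsicInterior_subset hy.1)
  rw [deg, hz] at hnonneg
  refine ⟨z.toNat, ?_⟩
  rw [deg, hz]
  exact_mod_cast (Int.toNat_of_nonneg (by exact_mod_cast hnonneg)).symm

/-- Degrees of lattice points of the cone are natural numbers, so the infimum defining `rdeg`
is attained. -/
theorem isLeast_rdeg {m : ℕ} {P : Set (Fin m → ℝ)} {y : Fin (m + 1) → ℝ} (hy : y ∈ Mstar P) :
    IsLeast {r | ∃ z w, z ∈ Mstar P ∧ w ∈ Msemi P ∧ y = z + w ∧ r = deg z} (rdeg P y) := by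
  set N : Set ℕ := {k | ∃ z w, z ∈ Mstar P ∧ w ∈ Msemi P ∧ y = z + w ∧ deg z = k}
  obtain ⟨k, hk⟩ := exists_deg_eq_natCast hy
  have hN : N.Nonempty := ⟨k, y, 0, hy, zero_mem _, (add_zero y).symm, hk⟩
  have hleast : IsLeast {r | ∃ z w, z ∈ Mstar P ∧ w ∈ Msemi P ∧ y = z + w ∧ r = deg z}
      (sInf N : ℕ) := by
    obtain ⟨z, w, hz, hw, hyzw, hdeg⟩ := Nat.sInf_mem hN
    refine ⟨⟨z, w, hz, hw, hyzw, hdeg.symm⟩, ?_⟩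
    rintro r ⟨z', w', hz', hw', hyzw', rfl⟩
    obtain ⟨k', hk'⟩ := exists_deg_eq_natCast hz'
    rw [hk']
    exact_mod_cast Nat.sInf_le (s := N) ⟨z', w', hz', hw', hyzw', hk'⟩
  rwa [rdeg, hleast.csInf_eq]

section LatticeStep

theorem exists_sum_eq_of_le_of_le :
    ∀ {n : ℕ} {l u : Fin n → ℤ}, (∀ i, l i ≤ u i) →
      ∀ {m : ℤ}, ∑ i, l i ≤ m → m ≤ ∑ i, u i →
      ∃ p : Fin n → ℤ, (∀ i, l i ≤ p i ∧ p i ≤ u i) ∧ ∑ i, p i = m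
  | 0, l, _, _, m, hl, hu => ⟨l, fun i => i.elim0, by simp at hl hu ⊢; omega⟩
  | n + 1, l, u, hlu, m, hl, hu => by
    rw [Fin.sum_univ_succ] at hl hu
    have hsum : ∑ i : Fin n, l i.succ ≤ ∑ i : Fin n, u i.succ :=
      Finset.sum_le_sum fun i _ => hlu i.succ
    set a := max (l 0) (m - ∑ i : Fin n, u i.succ)
    obtain ⟨q, hq, hqsum⟩ := exists_sum_eq_of_le_of_le (l := fun i => l i.succ)
      (u := fun i => u i.succ) (fun i => hlu i.succ) (m := m - a) (by omega) (by omega)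
    refine ⟨Fin.cons a q, fun i => ?_, by simp [Fin.sum_univ_succ, hqsum]⟩
    induction i using Fin.cases with
    | zero => simpa using ⟨le_max_left _ _, max_le (hlu 0) (by omega)⟩
    | succ i => simpa using hq i

variable {n : ℕ} {c x : Fin n → ℤ} {t : ℤ}

theorem sum_max_sub_le (hc : ∀ j, 2 ≤ c j) (ht : 2 ≤ t) (hx : ∀ j, 0 < x j ∧ x j < c j * t)
    (hs : ∑ j, x j < (n + 1) * t) :
    ∑ j, max 0 (x j - c j * (t - 1) + 1) ≤ n + 1 := by
  have hpoint : ∀ j, max 0 (x j - c j * (t - 1) + 1) * (t - 1) ≤ x j - 1 := by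
    intro j
    obtain ⟨hx₀, hxc⟩ := hx j
    rcases le_total (x j - c j * (t - 1) + 1) 0 with h | h
    · rw [max_eq_left h]; omega
    · rw [max_eq_right h]
      nlinarith [hc j,
        mul_nonneg (by nlinarith : 0 ≤ c j * t - 1 - x j) (by omega : (0 : ℤ) ≤ t - 2)]
  have htotal : (∑ j, max 0 (x j - c j * (t - 1) + 1)) * (t - 1) ≤ (n + 1) * (t - 1) :=
    calc (∑ j, max 0 (x j - c j * (t - 1) + 1)) * (t - 1)
        ≤ ∑ j, (x j - 1) := by
          rw [Finset.sum_mul]; exact Finset.sum_le_sum fun j _ => hpoint j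
      _ = ∑ j, x j - n := by simp [Finset.sum_sub_distrib]
      _ ≤ (n + 1) * (t - 1) := by linarith
  exact le_of_mul_le_mul_right htotal (by omega)

theorem sum_sub_le_sum_min (hn : n ≤ t) (ht : 2 ≤ t) (hx : ∀ j, 0 < x j ∧ x j < c j * t)
    (hs : ∑ j, x j < (n + 1) * t) :
    ∑ j, x j - ((n + 1) * (t - 1) - 1) ≤ ∑ j, min (c j) (x j - 1) := by
  classical
  set K := Finset.univ.filter fun j => c j < x j
  set L := Finset.univ.filter fun j => ¬ c j < x j
  have hsplit : ∀ f : Fin n → ℤ, ∑ j, f j = ∑ j ∈ K, f j + ∑ j ∈ L, f j := fun f =>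
    (Finset.sum_filter_add_sum_filter_not _ _ _).symm
  have hcard : (K.card : ℤ) + L.card = n := by
    exact_mod_cast (Finset.card_filter_add_card_filter_not (s := Finset.univ) _).trans
      (Finset.card_fin n)
  have hmin : ∑ j, min (c j) (x j - 1) = ∑ j ∈ K, c j + (∑ j ∈ L, x j - L.card) := by
    rw [hsplit, Finset.sum_congr rfl fun j hj => min_eq_left (?_ : c j ≤ x j - 1),
      Finset.sum_congr rfl fun j hj => min_eq_right (?_ : x j - 1 ≤ c j)]
    · simp [Finset.sum_sub_distrib]
    all_goals simp only [K, L, Finset.mem_filter] at hj; omega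
  have hK : ∑ j ∈ K, x j ≤ t * ∑ j ∈ K, c j - K.card := by
    rw [Finset.mul_sum, ← nsmul_one, ← Finset.sum_const, ← Finset.sum_sub_distrib]
    exact Finset.sum_le_sum fun j _ => by nlinarith [hx j]
  have hL : (L.card : ℤ) ≤ ∑ j ∈ L, x j := by
    simpa using Finset.card_nsmul_le_sum L x 1 fun j _ => (hx j).1
  rw [hmin, hsplit x]
  rw [hsplit x] at hs
  -- If the caps of the coordinates in `K` add up to more than `n`, the bound on `∑ x` suffices;
  -- otherwise the bounds `x j < c j * t` on `K` do.
  by_cases hC : (n : ℤ) + 1 ≤ ∑ j ∈ K, c j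
  · linarith
  rcases K.eq_empty_or_nonempty with hK₀ | hK₀
  · simp only [hK₀, Finset.sum_empty, Finset.card_empty] at hcard ⊢
    nlinarith
  · have : (1 : ℤ) ≤ K.card := by exact_mod_cast hK₀.card_pos
    nlinarith

theorem exists_lattice_point_sub (hc : ∀ j, 2 ≤ c j) (hn : n ≤ t) (ht : 2 ≤ t)
    (hx : ∀ j, 0 < x j ∧ x j < c j * t) (hs : ∑ j, x j < (n + 1) * t) :
    ∃ p : Fin n → ℤ, ((∀ j, 0 ≤ p j ∧ p j ≤ c j) ∧ ∑ j, p j ≤ n + 1) ∧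
      (∀ j, 0 < x j - p j ∧ x j - p j < c j * (t - 1)) ∧
      ∑ j, (x j - p j) < (n + 1) * (t - 1) := by
  -- `p` is admissible iff `l ≤ p ≤ u` and `∑ p` lies in a range that the two sum lemmas
  -- show to be compatible with these boxes.
  set l : Fin n → ℤ := fun j => max 0 (x j - c j * (t - 1) + 1)
  set u : Fin n → ℤ := fun j => min (c j) (x j - 1)
  have hlu : ∀ j, l j ≤ u j := fun j => by
    have := hx j; have := hc j
    simp only [l, u, max_le_iff, le_min_iff]; refine ⟨⟨?_, ?_⟩, ?_, ?_⟩ <;> nlinarith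
  set m := max (∑ j, l j) (∑ j, x j - ((n + 1) * (t - 1) - 1))
  obtain ⟨p, hp, hpsum⟩ := exists_sum_eq_of_le_of_le hlu (m := m) (le_max_left _ _)
    (max_le (Finset.sum_le_sum fun j _ => hlu j) (sum_sub_le_sum_min hn ht hx hs))
  have hl := sum_max_sub_le hc ht hx hs
  refine ⟨p, ⟨fun j => ?_, ?_⟩, fun j => ?_, ?_⟩
  · have := hp j; simp only [l, u, max_le_iff, le_min_iff] at this; omega
  · rw [hpsum]; exact max_le hl (by linarith)
  · have := hp j; simp only [l, u, max_le_iff, le_min_iff] at this; constructor <;> linarith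
  · have := le_max_right (∑ j, l j) (∑ j, x j - ((n + 1) * (t - 1) - 1))
    rw [Finset.sum_sub_distrib, hpsum]; linarith

end LatticeStep

section CapPolytope

variable {n : ℕ} {R : Type*} [Semiring R] [PartialOrder R]

def capPolytope (c : Fin n → R) (σ : R) : Set (Fin n → R) :=
  {x | (∀ j, 0 ≤ x j ∧ x j ≤ c j) ∧ ∑ j, x j ≤ σ}

def capCone (c : Fin n → R) (σ : R) : Set (Fin (n + 1) → R) :=
  {y | 0 ≤ y (Fin.last n) ∧
    (∀ j : Fin n, 0 ≤ y j.castSucc ∧ y j.castSucc ≤ c j * y (Fin.last n)) ∧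
    ∑ j : Fin n, y j.castSucc ≤ σ * y (Fin.last n)}

def capConeOpen (c : Fin n → R) (σ : R) : Set (Fin (n + 1) → R) :=
  {y | 0 < y (Fin.last n) ∧
    (∀ j : Fin n, 0 < y j.castSucc ∧ y j.castSucc < c j * y (Fin.last n)) ∧
    ∑ j : Fin n, y j.castSucc < σ * y (Fin.last n)}

variable {c : Fin n → ℝ} {σ : ℝ}

theorem lift_mem_capCone {p : Fin n → ℝ} (hp : p ∈ capPolytope c σ) :
    lift p ∈ capCone c σ := by
  simpa [capCone, capPolytope, lift] using hp

theorem coneOf_capPolytope_subset : coneOf (capPolytope c σ) ⊆ capCone c σ := by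
  rintro _ ⟨t, p, ht, hp, rfl⟩
  have hlift := lift_mem_capCone hp
  simp only [capCone, mem_ofPred_eq, Pi.smul_apply, smul_eq_mul] at hlift ⊢
  obtain ⟨hlast, hcoord, hsum⟩ := hlift
  refine ⟨mul_nonneg ht hlast, fun j => ⟨mul_nonneg ht (hcoord j).1, ?_⟩, ?_⟩
  · nlinarith [hcoord j]
  · rw [← Finset.mul_sum]; nlinarith

theorem Msemi_capPolytope_subset : (Msemi (capPolytope c σ) : Set _) ⊆ capCone c σ := by
  intro w hw
  induction hw using AddSubmonoid.closure_induction with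
  | mem _ hy => obtain ⟨p, hp, -, rfl⟩ := hy; exact lift_mem_capCone hp
  | zero => simp [capCone]
  | add u v _ _ hu hv =>
    obtain ⟨hu₀, hu, hus⟩ := hu
    obtain ⟨hv₀, hv, hvs⟩ := hv
    simp only [capCone, mem_ofPred_eq, Pi.add_apply, Finset.sum_add_distrib]
    exact ⟨by linarith, fun j => ⟨by linarith [hu j, hv j], by linarith [hu j, hv j]⟩,
      by linarith⟩

theorem capConeOpen_subset_coneOf : capConeOpen c σ ⊆ coneOf (capPolytope c σ) := by
  rintro y ⟨hlast, hcoord, hsum⟩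
  refine ⟨y (Fin.last n), fun j => y j.castSucc / y (Fin.last n), hlast.le,
    ⟨fun j => ?_, ?_⟩, ?_⟩
  · exact ⟨div_nonneg (hcoord j).1.le hlast.le, (div_le_iff₀ hlast).2 (hcoord j).2.le⟩
  · rw [← Finset.sum_div, div_le_iff₀ hlast]; exact hsum.le
  · ext i
    induction i using Fin.lastCases with
    | last => simp [lift]
    | cast j => simp [lift, mul_div_cancel₀ _ hlast.ne']

theorem isOpen_capConeOpen : IsOpen (capConeOpen c σ) := by
  simp only [capConeOpen, ofPred_and, forall_and, ofPred_forall]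
  refine .inter (isOpen_lt (by fun_prop) (by fun_prop)) (.inter (.inter ?_ ?_) ?_)
  · exact isOpen_iInter_of_finite fun j => isOpen_lt (by fun_prop) (by fun_prop)
  · exact isOpen_iInter_of_finite fun j => isOpen_lt (by fun_prop) (by fun_prop)
  · exact isOpen_lt (by fun_prop) (by fun_prop)

theorem interior_coneOf_capPolytope (hσ : 0 < σ) :
    interior (coneOf (capPolytope c σ)) = capConeOpen c σ := by
  refine subset_antisymm (fun y hy => ?_)
    (interior_maximal capConeOpen_subset_coneOf isOpen_capConeOpen)
  replace hy := interior_mono coneOf_capPolytope_subset hy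
  have key : ∀ (f : (Fin (n + 1) → ℝ) → ℝ) (i : Fin (n + 1)) (a : ℝ) {b : ℝ}, 0 < b →
      (∀ t : ℝ, f (y + t • Pi.single i a) = f y + b * t) → capCone c σ ⊆ {y | 0 ≤ f y} →
      0 < f y :=
    fun f i a b hb hf hsub => pos_of_mem_interior_setOf_nonneg hb hf (interior_mono hsub hy)
  refine ⟨key (· (Fin.last n)) (Fin.last n) 1 one_pos (by simp) fun y hy => hy.1,
    fun j => ⟨?_, ?_⟩, ?_⟩
  · exact key (· j.castSucc) j.castSucc 1 one_pos (by simp) fun y hy => (hy.2.1 j).1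
  · refine sub_pos.1 (key (fun y => c j * y (Fin.last n) - y j.castSucc) j.castSucc (-1)
      one_pos (fun t => ?_) fun y hy => sub_nonneg.2 (hy.2.1 j).2)
    simp [Fin.castSucc_ne_last]; ring
  · refine sub_pos.1 (key (fun y => σ * y (Fin.last n) - ∑ j : Fin n, y j.castSucc)
      (Fin.last n) 1 hσ (fun t => ?_) fun y hy => sub_nonneg.2 hy.2.2)
    simp [Fin.castSucc_ne_last]; ring

theorem intrinsicInterior_coneOf_capPolytope (hc : ∀ j, 1 < c j) (hσ : n < σ) :
    intrinsicInterior ℝ (coneOf (capPolytope c σ)) = capConeOpen c σ := by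
  have hσ₀ : 0 < σ := lt_of_le_of_lt (Nat.cast_nonneg n) hσ
  rw [intrinsicInterior_eq_interior_of_nonempty] <;> rw [interior_coneOf_capPolytope hσ₀]
  exact ⟨fun _ => 1, one_pos, fun j => ⟨one_pos, by simpa using hc j⟩, by simpa using hσ⟩

theorem mem_Mstar_capPolytope_iff (hc : ∀ j, 1 < c j) (hσ : n < σ) {y : Fin (n + 1) → ℝ} :
    y ∈ Mstar (capPolytope c σ) ↔ y ∈ capConeOpen c σ ∧ isLat y := by
  rw [Mstar, mem_ofPred_eq, intrinsicInterior_coneOf_capPolytope hc hσ]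

end CapPolytope

section IntCapPolytope

variable {n : ℕ}

abbrev intCapPolytope (c : Fin n → ℤ) : Set (Fin n → ℝ) :=
  capPolytope (fun j => (c j : ℝ)) (n + 1)

variable {c : Fin n → ℤ}

theorem mem_Mstar_intCapPolytope_iff (hc : ∀ j, 2 ≤ c j) {y : Fin (n + 1) → ℝ} :
    y ∈ Mstar (intCapPolytope c) ↔
      ∃ Y ∈ capConeOpen c ((n : ℤ) + 1), y = fun i => (Y i : ℝ) := by
  have hcast : ∀ Y : Fin (n + 1) → ℤ,
      (fun i => (Y i : ℝ)) ∈ capConeOpen (fun j => (c j : ℝ)) ((n : ℝ) + 1) ↔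
        Y ∈ capConeOpen c ((n : ℤ) + 1) := fun Y => by
    simp only [capConeOpen, mem_ofPred_eq]; norm_cast
  rw [mem_Mstar_capPolytope_iff (fun j => by exact_mod_cast hc j) (by linarith)]
  constructor
  · rintro ⟨hy, hlat⟩
    obtain ⟨Y, rfl⟩ := isLat_iff.1 hlat
    exact ⟨Y, (hcast Y).1 hy, rfl⟩
  · rintro ⟨Y, hY, rfl⟩
    exact ⟨(hcast Y).2 hY, isLat_iff.2 ⟨Y, rfl⟩⟩

theorem exists_sub_lift_mem_Mstar (hc : ∀ j, 2 ≤ c j) (hn : 2 ≤ n) {y : Fin (n + 1) → ℝ}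
    (hy : y ∈ Mstar (intCapPolytope c)) (hdeg : (n : ℝ) ≤ deg y) :
    ∃ p ∈ intCapPolytope c, isLat p ∧ y - lift p ∈ Mstar (intCapPolytope c) := by
  obtain ⟨Y, ⟨-, hcoord, hsum⟩, rfl⟩ := (mem_Mstar_intCapPolytope_iff hc).1 hy
  have ht : (n : ℤ) ≤ Y (Fin.last n) := by rw [deg] at hdeg; exact_mod_cast hdeg
  obtain ⟨p, hp, hsub, hsubsum⟩ := exists_lattice_point_sub hc ht (by omega) hcoord hsum
  refine ⟨fun j => p j, ?_, isLat_iff.2 ⟨p, rfl⟩,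
    (mem_Mstar_intCapPolytope_iff hc).2 ⟨Y - Fin.snoc p 1, ⟨?_, ?_, ?_⟩, ?_⟩⟩
  · simp only [capPolytope, mem_ofPred_eq]; exact_mod_cast hp
  · simp; omega
  · simpa using hsub
  · simpa using hsubsum
  · ext i
    induction i using Fin.lastCases <;> simp [lift]

theorem exists_add_deg_lt (hc : ∀ j, 2 ≤ c j) (hn : 2 ≤ n) {y : Fin (n + 1) → ℝ}
    (hy : y ∈ Mstar (intCapPolytope c)) :
    ∃ z w, z ∈ Mstar (intCapPolytope c) ∧ w ∈ Msemi (intCapPolytope c) ∧ y = z + w ∧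
      deg z < n := by
  obtain ⟨k, hk⟩ := exists_deg_eq_natCast hy
  induction k generalizing y with
  | zero => exact ⟨y, 0, hy, zero_mem _, (add_zero y).symm, by rw [hk]; norm_cast; omega⟩
  | succ k ih =>
    rcases lt_or_ge (deg y) n with hlt | hge
    · exact ⟨y, 0, hy, zero_mem _, (add_zero y).symm, hlt⟩
    obtain ⟨p, hp, hpl, hyp⟩ := exists_sub_lift_mem_Mstar hc hn hy hge
    obtain ⟨z, w, hz, hw, hyzw, hdeg⟩ :=
      ih hyp (by rw [show deg (y - lift p) = deg y - deg (lift p) from rfl, deg_lift, hk]; simp)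
    have hlift : lift p ∈ Msemi (intCapPolytope c) :=
      AddSubmonoid.subset_closure ⟨p, hp, hpl, rfl⟩
    refine ⟨z, w + lift p, hz, add_mem hw hlift, ?_, hdeg⟩
    rw [← add_assoc, ← hyzw, sub_add_cancel]

theorem rdeg_intCapPolytope_mem (hc : ∀ j, 2 ≤ c j) (hn : 2 ≤ n) {y : Fin (n + 1) → ℝ}
    (hy : y ∈ Mstar (intCapPolytope c)) :
    ∃ i : ℕ, 1 ≤ i ∧ i ≤ n - 1 ∧ rdeg (intCapPolytope c) y = i := by
  obtain ⟨⟨z, w, hz, hw, hyzw, hr⟩, hle⟩ := isLeast_rdeg hy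
  obtain ⟨k, hk⟩ := exists_deg_eq_natCast hz
  obtain ⟨z', w', hz', hw', hyzw', hlt⟩ := exists_add_deg_lt hc hn hy
  have hkn : (k : ℝ) < n := by
    rw [← hk, ← hr]; exact (hle ⟨z', w', hz', hw', hyzw', rfl⟩).trans_lt hlt
  obtain ⟨Z, hZ, rfl⟩ := (mem_Mstar_intCapPolytope_iff hc).1 hz
  have hk0 : (0 : ℝ) < k := by rw [← hk, deg]; exact_mod_cast hZ.1
  have hkn' : k < n := by exact_mod_cast hkn
  exact ⟨k, by exact_mod_cast hk0, by omega, hr.trans hk⟩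

/-- Its coordinate sum `(n + 1) i - 1` lies just below the facet `x₁ + ⋯ + xₙ = (n + 1) · deg`,
so every interior lattice summand must carry its whole degree. -/
def rdegWitness (s : Fin n) (i : ℤ) : Fin (n + 1) → ℤ :=
  Fin.snoc (1 + Pi.single s ((n + 1) * i - n - 1)) i

theorem sum_rdegWitness (s : Fin n) (i : ℤ) :
    ∑ j : Fin n, rdegWitness s i j.castSucc = (n + 1) * i - 1 := by
  simp [rdegWitness, Finset.sum_add_distrib]; ring

theorem rdegWitness_mem_capConeOpen (hc : ∀ j, 2 ≤ c j) {s : Fin n} (hs : c s = n) {i : ℤ}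
    (hi : 1 ≤ i) (hin : i < n) : rdegWitness s i ∈ capConeOpen c ((n : ℤ) + 1) := by
  refine ⟨by simp [rdegWitness]; omega, fun j => ?_,
    by rw [sum_rdegWitness]; simp [rdegWitness]⟩
  rcases eq_or_ne j s with rfl | hj
  · simp [rdegWitness, hs]; constructor <;> nlinarith
  · simp [rdegWitness, hj]; nlinarith [hc j]

theorem last_eq_of_rdegWitness_eq_add {s : Fin n} (hs : c s = n) {i : ℤ}
    {Z W : Fin (n + 1) → ℤ} (hZ : Z ∈ capConeOpen c ((n : ℤ) + 1))
    (hW : W ∈ capCone c ((n : ℤ) + 1)) (h : rdegWitness s i = Z + W) : Z (Fin.last n) = i := by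
  obtain ⟨-, hZ, hZsum⟩ := hZ
  obtain ⟨hWlast, hW, -⟩ := hW
  have hcoord : ∀ j, rdegWitness s i j = Z j + W j := fun j => congrFun h j
  have hWzero : ∀ j ≠ s, W j.castSucc = 0 := fun j hj => by
    have := hcoord j.castSucc
    simp [rdegWitness, hj] at this
    linarith [hZ j, hW j]
  have hsum : (n + 1) * i - 1 = ∑ j : Fin n, Z j.castSucc + W s.castSucc := by
    rw [← sum_rdegWitness s i, ← Finset.sum_eq_single s (fun j _ hj => hWzero j hj)
      (fun hs => (hs (Finset.mem_univ s)).elim), ← Finset.sum_add_distrib]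
    exact Finset.sum_congr rfl fun j _ => hcoord j.castSucc
  have hlast := hcoord (Fin.last n)
  simp only [rdegWitness, Fin.snoc_last] at hlast
  have hWs := (hW s).2
  rw [hs] at hWs
  nlinarith

theorem exists_rdeg_eq (hc : ∀ j, 2 ≤ c j) {s : Fin n} (hs : c s = n) {i : ℕ} (hi : 1 ≤ i)
    (hin : i < n) : ∃ y ∈ Mstar (intCapPolytope c), rdeg (intCapPolytope c) y = i := by
  have hY : (fun k => (rdegWitness s i k : ℝ)) ∈ Mstar (intCapPolytope c) :=
    (mem_Mstar_intCapPolytope_iff hc).2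
      ⟨_, rdegWitness_mem_capConeOpen hc hs (by exact_mod_cast hi) (by exact_mod_cast hin), rfl⟩
  refine ⟨_, hY, ?_⟩
  obtain ⟨⟨z, w, hz, hw, hyzw, hr⟩, -⟩ := isLeast_rdeg hY
  obtain ⟨Z, hZ, rfl⟩ := (mem_Mstar_intCapPolytope_iff hc).1 hz
  have hw' : w = fun k => ((rdegWitness s i - Z) k : ℝ) := by
    funext k; have := congrFun hyzw k
    simp only [Pi.add_apply] at this; simp only [Pi.sub_apply, Int.cast_sub]; linarith
  have hW : rdegWitness s i - Z ∈ capCone c ((n : ℤ) + 1) := by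
    have := Msemi_capPolytope_subset hw
    rw [hw'] at this
    simp only [capCone, mem_ofPred_eq] at this ⊢
    exact_mod_cast this
  rw [hr, deg, last_eq_of_rdegWitness_eq_add hs hZ hW (add_sub_cancel Z _).symm]
  simp

theorem setOf_rdeg_intCapPolytope (hn : 2 ≤ n) (hc : ∀ j, 2 ≤ c j) {s : Fin n}
    (hs : c s = n) :
    {r : ℝ | ∃ y ∈ Mstar (intCapPolytope c), rdeg (intCapPolytope c) y = r} =
      {r : ℝ | ∃ i : ℕ, 1 ≤ i ∧ i ≤ n - 1 ∧ r = (i : ℝ)} := by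
  ext r
  constructor
  · rintro ⟨y, hy, rfl⟩
    obtain ⟨i, hi, hin, hr⟩ := rdeg_intCapPolytope_mem hc hn hy
    exact ⟨i, hi, hin, hr⟩
  · rintro ⟨i, hi, hin, rfl⟩
    exact exists_rdeg_eq hc hs hi (by omega)

end IntCapPolytope

def capsTwoD (d : ℕ) (j : Fin d) : ℤ := if (j : ℕ) < d - 1 then 2 else d

theorem two_le_capsTwoD {d : ℕ} (hd : 2 ≤ d) (j : Fin d) : 2 ≤ capsTwoD d j := by
  unfold capsTwoD; split_ifs <;> omega

theorem intCapPolytope_capsTwoD {d : ℕ} (hd : 2 ≤ d) :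
    intCapPolytope (capsTwoD d) = {x : Fin d → ℝ |
      (∀ i : Fin d, (i : ℕ) < d - 1 → 0 ≤ x i ∧ x i ≤ 2) ∧
      (0 ≤ x ⟨d - 1, Nat.sub_one_lt (by omega)⟩ ∧ x ⟨d - 1, Nat.sub_one_lt (by omega)⟩ ≤ (d : ℝ)) ∧
      (∑ i, x i) ≤ (d : ℝ) + 1} := by
  ext x
  simp only [intCapPolytope, capPolytope, capsTwoD, mem_ofPred_eq]
  rw [← and_assoc]
  refine and_congr_left fun _ => ⟨fun h => ⟨fun i hi => ?_, ?_⟩, fun ⟨hshort, hlast⟩ i => ?_⟩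
  · simpa [hi] using h i
  · simpa using h ⟨d - 1, Nat.sub_one_lt (by omega)⟩
  by_cases hi : (i : ℕ) < d - 1
  · simpa [hi] using hshort i hi
  · have hlast_idx : i = ⟨d - 1, Nat.sub_one_lt (by omega)⟩ :=
      Fin.ext (by have := i.isLt; simp; omega)
    rw [if_neg hi, hlast_idx]
    simpa using hlast

/-- for the polytope `0 ≤ xᵢ ≤ 2` (`i < d`), `0 ≤ x_d ≤ d`,
`x₁ + ⋯ + x_d ≤ d + 1`, the set of reduced degrees of elements of `M*(P)` is
exactly `{1, 2, …, d - 1}`. -/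
theorem stmt15 {d : ℕ} (hd : 2 ≤ d) (P : Set (Fin d → ℝ))
    (hP : P = {x : Fin d → ℝ |
      (∀ i : Fin d, (i : ℕ) < d - 1 → 0 ≤ x i ∧ x i ≤ 2) ∧
      (0 ≤ x ⟨d - 1, by omega⟩ ∧ x ⟨d - 1, by omega⟩ ≤ (d : ℝ)) ∧
      (∑ i, x i) ≤ (d : ℝ) + 1}) :
    {r : ℝ | ∃ y ∈ Mstar P, rdeg P y = r} =
      {r : ℝ | ∃ i : ℕ, 1 ≤ i ∧ i ≤ d - 1 ∧ r = (i : ℝ)} := by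
  rw [hP, ← intCapPolytope_capsTwoD hd]
  exact setOf_rdeg_intCapPolytope hd (two_le_capsTwoD hd)
    (s := ⟨d - 1, Nat.sub_one_lt (by omega)⟩) (by simp [capsTwoD])
end
end

section
/- Let σ be a lattice simplex of dimension d in ℝ^m with vertices x_0,...,x_d, let 𝒫 ⊇ σ be a lattice polytope of dimension d with 𝒫 ≠ σ, and suppose τ is a facet of σ with (τ \ ∂τ) ∩ ∂𝒫 = ∅, say x_0 ∉ τ. Then (x_1,1) + ··· + (x_d,1) lies in the relative interior of the cone C(𝒫). -/
open Set

noncomputable section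

/-!
The barycentre `b` of the facet `τ` lies in the relative interior of `τ`; since `τ ⊆ P` and the
relative interior of `τ` misses `∂P`, it lies in the relative interior of `P`. The sum in question
is `d • lift b`. Finally, the cone over `P` is relatively open at `c • lift q` whenever `c > 0` and
`q` is in the relative interior of `P`: a point `w` of the affine span of the cone with `w_last > 0`
dehomogenises to `(w_last)⁻¹ • Fin.init w`, a point of the affine span of `P` that is close to `q`
when `w` is close to `c • lift q`, hence a point of `P`.
-/

theorem mem_intrinsicInterior_iff_exists_isOpen {𝕜 V P : Type*} [Ring 𝕜] [AddCommGroup V]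
    [Module 𝕜 V] [TopologicalSpace P] [AddTorsor V P] {s : Set P} {x : P} :
    x ∈ intrinsicInterior 𝕜 s ↔
      x ∈ s ∧ ∃ U : Set P, IsOpen U ∧ x ∈ U ∧ U ∩ affineSpan 𝕜 s ⊆ s := by
  constructor
  · rintro ⟨y, hy, rfl⟩
    obtain ⟨t, hts, ht, hyt⟩ := mem_interior.1 hy
    obtain ⟨U, hU, rfl⟩ := isOpen_induced_iff.1 ht
    refine ⟨hts hyt, U, hU, hyt, fun z ⟨hzU, hzs⟩ => ?_⟩
    exact hts (show (⟨z, hzs⟩ : affineSpan 𝕜 s) ∈ _ from hzU)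
  · rintro ⟨hxs, U, hU, hxU, hUs⟩
    refine ⟨⟨x, subset_affineSpan 𝕜 s hxs⟩, mem_interior.2 ⟨((↑) : affineSpan 𝕜 s → P) ⁻¹' U,
      fun z hz => hUs ⟨hz, z.2⟩, hU.preimage continuous_subtype_val, hxU⟩, rfl⟩

theorem intrinsicInterior_subset_intrinsicInterior_of_disjoint {𝕜 V P : Type*} [Ring 𝕜]
    [AddCommGroup V] [Module 𝕜 V] [TopologicalSpace P] [AddTorsor V P] {s t : Set P}
    (hst : s ⊆ t) (h : Disjoint (s \ intrinsicFrontier 𝕜 s) (intrinsicFrontier 𝕜 t)) :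
    intrinsicInterior 𝕜 s ⊆ intrinsicInterior 𝕜 t := by
  intro x hx
  have hxs : x ∈ s \ intrinsicFrontier 𝕜 s := by
    rw [← intrinsicClosure_sdiff_intrinsicInterior]
    exact ⟨intrinsicInterior_subset hx, fun hx' => hx'.2 hx⟩
  rw [← intrinsicClosure_sdiff_intrinsicFrontier]
  exact ⟨subset_intrinsicClosure (hst hxs.1), disjoint_left.1 h hxs⟩

theorem Finset.card_smul_centroid {k V ι : Type*} [DivisionRing k] [CharZero k] [AddCommGroup V]
    [Module k V] {s : Finset ι} (hs : s.Nonempty) (p : ι → V) :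
    (s.card : k) • s.centroid k p = ∑ i ∈ s, p i := by
  rw [centroid_def, affineCombination_eq_linear_combination _ _ _
    (s.sum_centroidWeights_eq_one_of_nonempty k hs), smul_sum]
  refine sum_congr rfl fun i _ => ?_
  rw [centroidWeights_apply, smul_smul, mul_inv_cancel₀ (by simpa using hs.ne_empty), one_smul]

theorem AffineIndependent.centroid_mem_intrinsicInterior_convexHull {V ι : Type*}
    [NormedAddCommGroup V] [NormedSpace ℝ V] [Fintype ι] [Nonempty ι] {y : ι → V}
    (hy : AffineIndependent ℝ y) :
    Finset.univ.centroid ℝ y ∈ intrinsicInterior ℝ (convexHull ℝ (range y)) := by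
  -- Translated into the direction of its affine span, `y` becomes an affine basis.
  set c := Finset.univ.centroid ℝ y
  set W := vectorSpan ℝ (range y)
  have hyc : ∀ i, y i - c ∈ W := fun i => by
    rw [← vsub_eq_sub, show W = (affineSpan ℝ (range y)).direction from
      (direction_affineSpan ℝ _).symm]
    exact AffineSubspace.vsub_mem_direction (subset_affineSpan ℝ _ (mem_range_self i))
      (centroid_mem_affineSpan_of_nonempty ℝ y Finset.univ_nonempty)
  let z : ι → W := fun i => ⟨y i - c, hyc i⟩
  let φ : W →ᵃⁱ[ℝ] V :=
    (AffineIsometryEquiv.vaddConst ℝ c).toAffineIsometry.comp W.subtypeₗᵢ.toAffineIsometry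
  have hφz : φ ∘ z = y := by ext i; simp [φ, z]
  have hz : AffineIndependent ℝ z := .of_comp φ.toAffineMap (by simpa [hφz] using hy)
  have hspan : affineSpan ℝ (range z) = ⊤ := by
    have hcard : Fintype.card ι = Fintype.card ι - 1 + 1 := by
      have := Fintype.card_pos (α := ι); omega
    rw [hz.affineSpan_eq_top_iff_card_eq_finrank_add_one, hy.finrank_vectorSpan hcard, ← hcard]
  let b : AffineBasis ι ℝ W := ⟨z, hz, hspan⟩
  have hφc : φ (Finset.univ.centroid ℝ z) = c := by
    rw [Finset.centroid_def, ← φ.coe_toAffineMap, Finset.map_affineCombination _ _ _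
      (Finset.univ.sum_centroidWeights_eq_one_of_nonempty ℝ Finset.univ_nonempty),
      φ.coe_toAffineMap, hφz]
    rfl
  have hhull : φ '' convexHull ℝ (range z) = convexHull ℝ (range y) := by
    rw [← φ.coe_toAffineMap, AffineMap.image_convexHull, ← range_comp]; simp [hφz]
  rw [← hhull, AffineIsometry.intrinsicInterior_image, ← hφc]
  exact mem_image_of_mem φ (interior_subset_intrinsicInterior b.centroid_mem_interior_convexHull)

section Lift

variable {m : ℕ}

@[simp]
theorem init_lift (p : Fin m → ℝ) : Fin.init (lift p) = p := Fin.init_snoc _ _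

@[simp]
theorem lift_last (p : Fin m → ℝ) : lift p (Fin.last m) = 1 := Fin.snoc_last _ _

@[simp]
theorem init_smul_lift (c : ℝ) (p : Fin m → ℝ) : Fin.init (c • lift p) = c • p := by
  ext; simp [Fin.init, lift]

theorem smul_lift_inv_smul_init {w : Fin (m + 1) → ℝ} (hw : w (Fin.last m) ≠ 0) :
    w (Fin.last m) • lift ((w (Fin.last m))⁻¹ • Fin.init w) = w := by
  ext i
  induction i using Fin.lastCases with
  | last => simp
  | cast j => simp [lift, Fin.init, hw]

theorem sum_lift {ι : Type*} [Fintype ι] [Nonempty ι] (p : ι → Fin m → ℝ) :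
    ∑ i, lift (p i) = (Fintype.card ι : ℝ) • lift (Finset.univ.centroid ℝ p) := by
  ext i
  induction i using Fin.lastCases with
  | last => simp [Finset.sum_apply]
  | cast j =>
    have := congrFun (Finset.univ.card_smul_centroid (k := ℝ) Finset.univ_nonempty p) j
    simp_all [Finset.sum_apply, lift]

theorem mem_coneOf_of_last_pos {P : Set (Fin m → ℝ)} {w : Fin (m + 1) → ℝ}
    (hw : 0 < w (Fin.last m)) (hP : (w (Fin.last m))⁻¹ • Fin.init w ∈ P) : w ∈ coneOf P :=
  ⟨_, _, hw.le, hP, (smul_lift_inv_smul_init hw.ne').symm⟩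

theorem inv_smul_init_mem_affineSpan {P : Set (Fin m → ℝ)} {w : Fin (m + 1) → ℝ}
    (hw : w ∈ affineSpan ℝ (coneOf P)) (hlast : w (Fin.last m) ≠ 0) :
    (w (Fin.last m))⁻¹ • Fin.init w ∈ affineSpan ℝ P := by
  obtain ⟨-, -, b, -, hb, -⟩ := (affineSpan_nonempty ℝ).1 ⟨w, hw⟩
  let Φ : (Fin (m + 1) → ℝ) →ₗ[ℝ] (Fin m → ℝ) :=
    LinearMap.funLeft ℝ ℝ Fin.castSucc - (LinearMap.proj (Fin.last m)).smulRight b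
  have hΦ : ∀ w, Φ w = Fin.init w - w (Fin.last m) • b := fun _ => rfl
  have hcone : coneOf P ⊆ ((vectorSpan ℝ P).comap Φ).toAffineSubspace := by
    rintro _ ⟨c, p, -, hp, rfl⟩
    have : Φ (c • lift p) = c • (p -ᵥ b) := by simp [hΦ, smul_sub]
    simpa [this] using Submodule.smul_mem _ c (vsub_mem_vectorSpan ℝ hp hb)
  have hΦw : Φ w ∈ vectorSpan ℝ P := affineSpan_le.2 hcone hw
  have hdir : (w (Fin.last m))⁻¹ • Fin.init w -ᵥ b ∈ (affineSpan ℝ P).direction := by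
    rw [direction_affineSpan, vsub_eq_sub,
      show (w (Fin.last m))⁻¹ • Fin.init w - b = (w (Fin.last m))⁻¹ • Φ w by
        rw [hΦ, smul_sub, smul_smul, inv_mul_cancel₀ hlast, one_smul]]
    exact Submodule.smul_mem _ _ hΦw
  simpa using AffineSubspace.vadd_mem_of_mem_direction hdir (subset_affineSpan ℝ P hb)

theorem smul_lift_mem_intrinsicInterior_coneOf {P : Set (Fin m → ℝ)} {p : Fin m → ℝ}
    (hp : p ∈ intrinsicInterior ℝ P) {c : ℝ} (hc : 0 < c) :
    c • lift p ∈ intrinsicInterior ℝ (coneOf P) := by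
  obtain ⟨hpP, O, hO, hpO, hOP⟩ := mem_intrinsicInterior_iff_exists_isOpen.1 hp
  let U : Set (Fin (m + 1) → ℝ) :=
    {w | 0 < w (Fin.last m)} ∩ (fun w => (w (Fin.last m))⁻¹ • Fin.init w) ⁻¹' O
  have hU : IsOpen U := by
    refine ContinuousOn.isOpen_inter_preimage ?_
      (isOpen_lt continuous_const (continuous_apply _)) hO
    exact ((continuous_apply _).continuousOn.inv₀ fun w hw => hw.ne').smul
      (continuous_pi fun i => continuous_apply i.castSucc).continuousOn
  refine mem_intrinsicInterior_iff_exists_isOpen.2 ⟨⟨c, p, hc.le, hpP, rfl⟩, U, hU,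
    ⟨by simpa using hc, by simpa [smul_smul, hc.ne'] using hpO⟩, ?_⟩
  rintro w ⟨⟨hw, hwO⟩, hwspan⟩
  exact mem_coneOf_of_last_pos hw (hOP ⟨hwO, inv_smul_init_mem_affineSpan hwspan hw.ne'⟩)

end Lift

theorem stmt17_general {m d : ℕ} (hd : 1 ≤ d) (σ P : Set (Fin m → ℝ))
    (x : Fin (d + 1) → (Fin m → ℝ)) (hx : AffineIndependent ℝ x)
    (hσ : σ = convexHull ℝ (Set.range x))
    (hsub : σ ⊆ P)
    (τ : Set (Fin m → ℝ)) (hτ : τ = convexHull ℝ (Set.range fun j : Fin d => x j.succ))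
    (hfacet : Disjoint (τ \ intrinsicFrontier ℝ τ) (intrinsicFrontier ℝ P)) :
    (∑ j : Fin d, lift (x j.succ)) ∈ intrinsicInterior ℝ (coneOf P) := by
  have : Nonempty (Fin d) := ⟨⟨0, hd⟩⟩
  have hτσ : τ ⊆ σ := hτ ▸ hσ ▸ convexHull_mono (range_comp_subset_range _ _)
  have hcentroid : Finset.univ.centroid ℝ (fun j : Fin d => x j.succ) ∈ intrinsicInterior ℝ τ :=
    hτ ▸ (hx.comp_embedding (Fin.succEmb d)).centroid_mem_intrinsicInterior_convexHull
  rw [sum_lift, Fintype.card_fin]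
  exact smul_lift_mem_intrinsicInterior_coneOf
    (intrinsicInterior_subset_intrinsicInterior_of_disjoint (hτσ.trans hsub) hfacet hcentroid)
    (by exact_mod_cast hd)

/-- if `σ ⊆ P`, `P ≠ σ`, and the facet `τ = conv{x₁,…,x_d}` of `σ`
satisfies `(τ \\ ∂τ) ∩ ∂P = ∅`, then `(x₁,1) + ⋯ + (x_d,1) ∈ Int C(P)`. -/
theorem stmt17 {m d : ℕ} (hd : 1 ≤ d) (σ P : Set (Fin m → ℝ))
    (x : Fin (d + 1) → (Fin m → ℝ)) (hx : AffineIndependent ℝ x)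
    (hxlat : ∀ i, isLat (x i)) (hσ : σ = convexHull ℝ (Set.range x))
    (V : Set (Fin m → ℝ)) (hV : V.Finite) (hVlat : ∀ p ∈ V, isLat p)
    (hP : P = convexHull ℝ V) (hdim : Module.finrank ℝ (vectorSpan ℝ P) = d)
    (hsub : σ ⊆ P) (hne : P ≠ σ)
    (τ : Set (Fin m → ℝ)) (hτ : τ = convexHull ℝ (Set.range fun j : Fin d => x j.succ))
    (hfacet : Disjoint (τ \ intrinsicFrontier ℝ τ) (intrinsicFrontier ℝ P)) :
    (∑ j : Fin d, lift (x j.succ)) ∈ intrinsicInterior ℝ (coneOf P) :=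
  stmt17_general hd σ P x hx hσ hsub τ hτ hfacet
end
end
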